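/- Let k ≥ 2, C > 0, and let f be holomorphic on a neighborhood of the closed disk \overline{Δ(z*, r)} where 0 < 2r < 1 and 4r(1+C)/(1−2r) ≤ 1. Suppose |f^{(k)}(z)| ≤ C(1 + |f(z)|) for all z in \overline{Δ(z*,r)}, and suppose there exist points w_0, w_1, …, w_{k−1} ∈ Δ(z*, r) with |f(w_0)| ≤ 1 and |f^{(j)}(w_j)| ≤ 1 + |f(w_j)| for j = 1, …, k−1. Then M(r, f) ≤ 2C + 2/(1 − 2r), where M(r, f) = max over |z − z*| ≤ r of |f(z)|. -/

import Mathlib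

/-!
Let `M j` be the maximum of `|f^{(j)}|` on the closed disk. Any two points of the disk are at
distance at most `2r`, so the mean value inequality turns a bound on `|f^{(j)}|` at a single point
into a bound on `M j` up to `2r · M (j + 1)`. The points `w₀, …, w_{k-1}` thus give
`M 0 ≤ 1 + 2r M 1` and `M j ≤ 1 + M 0 + 2r M (j + 1)` for `1 ≤ j < k`, while the differential
inequality gives `M k ≤ C (1 + M 0)`. Descending from `k`, every `M j` with `j ≥ 1` is at most
`(1 + M 0)(1/(1 - 2r) + C)`; the condition on `r` makes `2r (1/(1 - 2r) + C) ≤ 1/2`, so this bound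
can be absorbed into `M 0 ≤ 1 + 2r M 1`.
-/

open Metric

theorem norm_le_add_two_mul_of_norm_deriv_le {𝕜 G : Type*} [RCLike 𝕜] [NormedAddCommGroup G]
    [NormedSpace 𝕜 G] {g : 𝕜 → G} {c w z : 𝕜} {r A B : ℝ}
    (hg : ∀ x ∈ closedBall c r, DifferentiableAt 𝕜 g x)
    (hB : ∀ x ∈ closedBall c r, ‖deriv g x‖ ≤ B)
    (hw : w ∈ closedBall c r) (hz : z ∈ closedBall c r) (hA : ‖g w‖ ≤ A) :
    ‖g z‖ ≤ A + 2 * r * B := by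
  have hB0 : 0 ≤ B := (norm_nonneg _).trans (hB z hz)
  have hzw : ‖z - w‖ ≤ 2 * r := by
    rw [← dist_eq_norm]
    linarith [dist_triangle_right z w c, mem_closedBall.mp hz, mem_closedBall.mp hw]
  calc ‖g z‖ ≤ ‖g w‖ + ‖g z - g w‖ := norm_le_norm_add_norm_sub' _ _
    _ ≤ A + B * ‖z - w‖ :=
      add_le_add hA ((convex_closedBall c r).norm_image_sub_le_of_norm_deriv_le hg hB hw hz)
    _ ≤ A + 2 * r * B := by nlinarith

theorem le_of_forall_le_add_mul_succ {M : ℕ → ℝ} {m k : ℕ} {a q B : ℝ} (hq : 0 ≤ q)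
    (hB : a + q * B ≤ B) (hstep : ∀ j, m ≤ j → j < k → M j ≤ a + q * M (j + 1))
    (hk : M k ≤ B) (hmk : m ≤ k) : M m ≤ B :=
  Nat.decreasingInduction' (fun j hjk hmj ih =>
    (hstep j hmj hjk).trans ((add_le_add_right (mul_le_mul_of_nonneg_left ih hq) a).trans hB))
    hmk hk

theorem le_two_mul_add_two_div_of_chain {M : ℕ → ℝ} {k : ℕ} {r C : ℝ} (hk : 1 ≤ k)
    (hr : 0 ≤ r) (hr2 : 2 * r < 1) (hC : 0 ≤ C) (hr3 : 4 * r * (1 + C) / (1 - 2 * r) ≤ 1)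
    (hM0 : 0 ≤ M 0) (h0 : M 0 ≤ 1 + 2 * r * M 1)
    (hstep : ∀ j, 1 ≤ j → j < k → M j ≤ 1 + M 0 + 2 * r * M (j + 1))
    (hMk : M k ≤ C * (1 + M 0)) :
    M 0 ≤ 2 * C + 2 / (1 - 2 * r) := by
  have hpos : 0 < 1 - 2 * r := by linarith
  have hu0 : 0 < 1 / (1 - 2 * r) := by positivity
  have hu : 1 / (1 - 2 * r) * (1 - 2 * r) = 1 := one_div_mul_cancel hpos.ne'
  rw [← mul_one_div 2 (1 - 2 * r)]
  generalize 1 / (1 - 2 * r) = u at hu0 hu ⊢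
  have h1M0 : 0 ≤ 1 + M 0 := by linarith
  have hM1 : M 1 ≤ (1 + M 0) * (u + C) := by
    refine le_of_forall_le_add_mul_succ (by positivity) ?_ hstep ?_ hk
    · have hgap : 0 ≤ (1 + M 0) * C * (1 - 2 * r) := by positivity
      linear_combination (-(1 + M 0)) * hu + hgap
    · exact hMk.trans (by nlinarith)
  have half : 2 * r * (u + C) ≤ 1 / 2 := by
    rw [div_le_one hpos] at hr3
    refine le_of_mul_le_mul_right ?_ hpos
    nlinarith
  have h0' : M 0 ≤ 1 + (1 + M 0) * (2 * r * (u + C)) := by nlinarith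
  calc M 0 ≤ 2 + 2 * (2 * r * (u + C)) := by nlinarith
    _ = 2 * u + 4 * r * C := by linear_combination (-2) * hu
    _ ≤ 2 * C + 2 * u := by nlinarith

/-- Let k ≥ 2, C > 0, f holomorphic on a neighborhood of the closed disk
Δ(z*,r) with 0 < 2r < 1 and 4r(1+C)/(1−2r) ≤ 1, |f^(k)| ≤ C(1+|f|) on the
closed disk, |f(w₀)| ≤ 1 for some w₀ ∈ Δ(z*,r), and for j = 1,…,k−1 there is
w_j ∈ Δ(z*,r) with |f^(j)(w_j)| ≤ 1 + |f(w_j)|. Then M(r,f) ≤ 2C + 2/(1−2r). -/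
theorem stmt_11 (z₀ : ℂ) (r : ℝ) (hr : 0 < r) (hr2 : 2 * r < 1)
    (C : ℝ) (hC : 0 < C) (hr3 : 4 * r * (1 + C) / (1 - 2 * r) ≤ 1)
    (U : Set ℂ) (hU : IsOpen U) (hUD : Metric.closedBall z₀ r ⊆ U)
    (k : ℕ) (hk : 2 ≤ k)
    (f : ℂ → ℂ) (hf : DifferentiableOn ℂ f U)
    (hfk : ∀ z ∈ Metric.closedBall z₀ r,
      ‖iteratedDeriv k f z‖ ≤ C * (1 + ‖f z‖))
    (hw0 : ∃ w ∈ Metric.ball z₀ r, ‖f w‖ ≤ 1)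
    (hwj : ∀ j : ℕ, 1 ≤ j → j ≤ k - 1 → ∃ w ∈ Metric.ball z₀ r,
      ‖iteratedDeriv j f w‖ ≤ 1 + ‖f w‖) :
    ∀ z ∈ Metric.closedBall z₀ r,
      ‖f z‖ ≤ 2 * C + 2 / (1 - 2 * r) := by
  have hdiff : ∀ j, ∀ x ∈ closedBall z₀ r, DifferentiableAt ℂ (iteratedDeriv j f) x := by
    intro j x hx
    rw [iteratedDeriv_eq_iterate]
    exact ((hf.analyticOnNhd hU).iterated_deriv j x (hUD hx)).differentiableAt
  have hmax (j : ℕ) : ∃ z ∈ closedBall z₀ r,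
      ∀ x ∈ closedBall z₀ r, ‖iteratedDeriv j f x‖ ≤ ‖iteratedDeriv j f z‖ :=
    (isCompact_closedBall z₀ r).exists_isMaxOn ⟨z₀, mem_closedBall_self hr.le⟩
      fun x hx => (hdiff j x hx).continuousAt.continuousWithinAt.norm
  choose z hzK hz using hmax
  set M := fun j => ‖iteratedDeriv j f (z j)‖
  have hf_le : ∀ x ∈ closedBall z₀ r, ‖f x‖ ≤ M 0 := by simpa [M] using hz 0
  have hstep (j : ℕ) (w : ℂ) (A : ℝ) (hw : w ∈ ball z₀ r) (hA : ‖iteratedDeriv j f w‖ ≤ A) :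
      M j ≤ A + 2 * r * M (j + 1) :=
    norm_le_add_two_mul_of_norm_deriv_le (hdiff j)
      (by simpa [M, iteratedDeriv_succ] using hz (j + 1)) (ball_subset_closedBall hw) (hzK j) hA
  intro x hx
  refine (hf_le x hx).trans (le_two_mul_add_two_div_of_chain (M := M) (k := k) (by omega)
    hr.le hr2 hC.le hr3 (norm_nonneg _) ?_ ?_ ?_)
  · obtain ⟨w, hw, hfw⟩ := hw0
    exact hstep 0 w 1 hw (by simpa using hfw)
  · intro j hj1 hjk
    obtain ⟨w, hw, hfw⟩ := hwj j hj1 (by omega)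
    exact hstep j w _ hw (hfw.trans (by linarith [hf_le w (ball_subset_closedBall hw)]))
  · exact (hfk _ (hzK k)).trans (by gcongr; exact hf_le _ (hzK k))
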